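/- arXiv:1101.5248 — 5 statements merged into one kernel-verified Lean document; each statement's English description precedes it below -/
import Mathlib

section
/- Let ε_1,...,ε_N be i.i.d. with density f_ε on [-1,1] satisfying min(P(ε ≥ 1-κ), P(ε ≤ -1+κ)) ≥ c·κ for all κ ∈ (0,1) with constant c > 0. Then for any function values f_1,...,f_N ∈ ℝ with |f_i| ≤ 1 and any Δ > 0, P(max_{i≤N} |ε_i - f_i| ≤ 1 + Δ) ≤ exp(-c·Σ_{i=1}^N (|f_i| - Δ)_+). -/
/-!
Fix `i` and put `κ = |fᵢ| - Δ`. If `κ > 0`, say `fᵢ ≥ 0`, then on the event `|εᵢ - fᵢ| ≤ 1 + Δ`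
we have `εᵢ ≥ -1 + κ`, so the event misses `{εᵢ ≤ -1 + κ'}` for every `κ' < κ`; the tail bound
and a limit `κ' ↑ κ` give `P(|εᵢ - fᵢ| ≤ 1 + Δ) ≤ 1 - cκ ≤ exp (-cκ)`. Independence turns the
probability of the intersection into the product of these bounds.
-/

open Set MeasureTheory Filter Topology

lemma mul_le_of_forall_mem_Ioo_mul_le {a c κ : ℝ} (hκ : 0 < κ)
    (h : ∀ κ' ∈ Ioo 0 κ, c * κ' ≤ a) : c * κ ≤ a :=
  le_of_tendsto ((continuous_const.mul continuous_id).tendsto κ |>.mono_left nhdsWithin_le_nhds)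
    (eventually_of_mem (Ioo_mem_nhdsLT hκ) h)

section

variable {Ω : Type*} [MeasurableSpace Ω] {P : Measure Ω} [IsProbabilityMeasure P]

lemma measureReal_le_one_sub_mul_of_disjoint {A : Set Ω} {B : ℝ → Set Ω} {c κ : ℝ}
    (hκ : 0 < κ) (hB : ∀ κ' ∈ Ioo 0 κ, MeasurableSet (B κ'))
    (hdisj : ∀ κ' ∈ Ioo 0 κ, Disjoint A (B κ'))
    (htail : ∀ κ' ∈ Ioo 0 κ, c * κ' ≤ P.real (B κ')) :
    P.real A ≤ 1 - c * κ := by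
  suffices c * κ ≤ 1 - P.real A by linarith
  refine mul_le_of_forall_mem_Ioo_mul_le hκ fun κ' hκ' => ?_
  have hunion : P.real A + P.real (B κ') ≤ 1 :=
    measureReal_union (μ := P) (hdisj κ' hκ') (hB κ' hκ') ▸ measureReal_le_one
  linarith [htail κ' hκ']

lemma measureReal_abs_sub_le_le_one_sub {X : Ω → ℝ} (hX : Measurable X) {c : ℝ}
    (htail : ∀ κ : ℝ, 0 < κ → κ < 1 →
      c * κ ≤ min (P.real {ω | 1 - κ ≤ X ω}) (P.real {ω | X ω ≤ -1 + κ}))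
    {f Δ : ℝ} (hf : |f| ≤ 1) (hΔ : 0 < Δ) :
    P.real {ω | |X ω - f| ≤ 1 + Δ} ≤ 1 - c * max (|f| - Δ) 0 := by
  rcases le_or_gt (|f| - Δ) 0 with hκ | hκ
  · simp [max_eq_right hκ]
  rw [max_eq_left hκ.le]
  have hκ1 : ∀ κ' ∈ Ioo 0 (|f| - Δ), κ' < 1 := fun κ' hκ' => by linarith [hκ'.2]
  rcases le_total 0 f with hf0 | hf0
  · refine measureReal_le_one_sub_mul_of_disjoint hκ
      (fun κ' _ => measurableSet_le hX measurable_const) (fun κ' hκ' => ?_)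
      (fun κ' hκ' => (htail κ' hκ'.1 (hκ1 κ' hκ')).trans (min_le_right _ _))
    refine disjoint_left.2 fun ω hA hB => ?_
    simp only [mem_ofPred_eq, abs_le, abs_of_nonneg hf0] at hA hB hκ'
    linarith [hκ'.2]
  · refine measureReal_le_one_sub_mul_of_disjoint hκ
      (fun κ' _ => measurableSet_le measurable_const hX) (fun κ' hκ' => ?_)
      (fun κ' hκ' => (htail κ' hκ'.1 (hκ1 κ' hκ')).trans (min_le_left _ _))
    refine disjoint_left.2 fun ω hA hB => ?_
    simp only [mem_ofPred_eq, abs_le, abs_of_nonpos hf0] at hA hB hκ'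
    linarith [hκ'.2]

end

theorem stmt2_general {Ω : Type*} [MeasurableSpace Ω] (P : Measure Ω) [IsProbabilityMeasure P]
    (N : ℕ) (ε : Fin N → Ω → ℝ) (hmeas : ∀ i, Measurable (ε i))
    (hindep : ProbabilityTheory.iIndepFun ε P)
    (c : ℝ)
    (htail : ∀ i, ∀ κ : ℝ, 0 < κ → κ < 1 →
      c * κ ≤ min (P {ω | 1 - κ ≤ ε i ω}).toReal (P {ω | ε i ω ≤ -1 + κ}).toReal)
    (fv : Fin N → ℝ) (hfv : ∀ i, |fv i| ≤ 1) (Δ : ℝ) (hΔ : 0 < Δ) :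
    (P {ω | ∀ i, |ε i ω - fv i| ≤ 1 + Δ}).toReal ≤
      Real.exp (-c * ∑ i, max (|fv i| - Δ) 0) := by
  have hset : {ω | ∀ i, |ε i ω - fv i| ≤ 1 + Δ} = ⋂ i, ε i ⁻¹' {x | |x - fv i| ≤ 1 + Δ} := by
    ext ω
    simp
  rw [hset, hindep.meas_iInter fun i => ⟨{x | |x - fv i| ≤ 1 + Δ}, measurableSet_le
    (measurable_id.sub measurable_const).abs measurable_const, rfl⟩, ENNReal.toReal_prod]
  calc ∏ i, (P (ε i ⁻¹' {x | |x - fv i| ≤ 1 + Δ})).toReal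
      ≤ ∏ i, Real.exp (-(c * max (|fv i| - Δ) 0)) :=
        Finset.prod_le_prod (fun i _ => ENNReal.toReal_nonneg) fun i _ =>
          (measureReal_abs_sub_le_le_one_sub (hmeas i) (htail i) (hfv i) hΔ).trans
            (Real.one_sub_le_exp_neg _)
    _ = Real.exp (-c * ∑ i, max (|fv i| - Δ) 0) := by
        rw [← Real.exp_sum, Finset.sum_neg_distrib, neg_mul, Finset.mul_sum]

theorem stmt2 {Ω : Type*} [MeasurableSpace Ω] (P : Measure Ω) [IsProbabilityMeasure P]
    (N : ℕ) (ε : Fin N → Ω → ℝ) (hmeas : ∀ i, Measurable (ε i))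
    (hindep : ProbabilityTheory.iIndepFun ε P)
    (hident : ∀ i j, Measure.map (ε i) P = Measure.map (ε j) P)
    (c : ℝ) (hc : 0 < c)
    (htail : ∀ i, ∀ κ : ℝ, 0 < κ → κ < 1 →
      c * κ ≤ min (P {ω | 1 - κ ≤ ε i ω}).toReal (P {ω | ε i ω ≤ -1 + κ}).toReal)
    (hsupp : ∀ i, P {ω | |ε i ω| ≤ 1} = 1)
    (fv : Fin N → ℝ) (hfv : ∀ i, |fv i| ≤ 1) (Δ : ℝ) (hΔ : 0 < Δ) :
    (P {ω | ∀ i, |ε i ω - fv i| ≤ 1 + Δ}).toReal ≤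
      Real.exp (-c * ∑ i, max (|fv i| - Δ) 0) :=
  stmt2_general P N ε hmeas hindep c htail fv hfv Δ hΔ
end

section
/- For every quadratic polynomial p on an interval U of length 2h, the supremum norm is bounded by the scaled L¹ norm: sup_{x∈U} |p(x)| ≤ 8 h^{-1} ∫_U |p(x)| dx. -/
open Set MeasureTheory Polynomial

/-!
Let `M = |p x₀|` be the maximum of `|p|` on `U = [a, a + 2h]`. Since `p'` is affine and, at the
endpoints of `U`, a three-point combination of the values of `p` at `a, a + h, a + 2h`, Markov's
bound `|p'| ≤ 4M/h` holds on `U`. Hence `|p t| ≥ M - (4M/h)|t - x₀|`, and integrating this tent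
over an interval of length `h/4` inside `U` with endpoint `x₀` gives `∫_U |p| ≥ Mh/4 - Mh/8 = Mh/8`.
-/

namespace Polynomial

variable {R : Type*} [CommRing R]

theorem eval_eq_of_natDegree_le_one {p : R[X]} (hp : p.natDegree ≤ 1) (x : R) :
    p.eval x = p.coeff 0 + p.coeff 1 * x := by
  rw [eval_eq_sum_range' (n := 2) (by omega)]
  simp only [Finset.sum_range_succ, Finset.sum_range_zero]
  ring

theorem eval_eq_of_natDegree_le_two {p : R[X]} (hp : p.natDegree ≤ 2) (x : R) :
    p.eval x = p.coeff 0 + p.coeff 1 * x + p.coeff 2 * x ^ 2 := by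
  rw [eval_eq_sum_range' (n := 3) (by omega)]
  simp only [Finset.sum_range_succ, Finset.sum_range_zero]
  ring

theorem eval_derivative_eq_of_natDegree_le_two {p : R[X]} (hp : p.natDegree ≤ 2) (x : R) :
    p.derivative.eval x = p.coeff 1 + 2 * p.coeff 2 * x := by
  rw [eval_eq_sum_range' (n := 2) (by have := p.natDegree_derivative_le; omega)]
  simp only [Finset.sum_range_succ, Finset.sum_range_zero, coeff_derivative]
  push_cast
  ring

theorem eval_derivative_left_mul_eq {p : R[X]} (hp : p.natDegree ≤ 2) (a h : R) :
    p.derivative.eval a * (2 * h) = -3 * p.eval a + 4 * p.eval (a + h) - p.eval (a + 2 * h) := by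
  simp only [eval_eq_of_natDegree_le_two hp, eval_derivative_eq_of_natDegree_le_two hp]
  ring

theorem eval_derivative_right_mul_eq {p : R[X]} (hp : p.natDegree ≤ 2) (a h : R) :
    p.derivative.eval (a + 2 * h) * (2 * h) =
      p.eval a - 4 * p.eval (a + h) + 3 * p.eval (a + 2 * h) := by
  simp only [eval_eq_of_natDegree_le_two hp, eval_derivative_eq_of_natDegree_le_two hp]
  ring

theorem abs_eval_le_of_natDegree_le_one {q : ℝ[X]} (hq : q.natDegree ≤ 1) {a b K y : ℝ}
    (ha : |q.eval a| ≤ K) (hb : |q.eval b| ≤ K) (hy : y ∈ Icc a b) : |q.eval y| ≤ K := by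
  have hcomb : (b - a) * q.eval y = (b - y) * q.eval a + (y - a) * q.eval b := by
    simp only [eval_eq_of_natDegree_le_one hq]; ring
  rcases eq_or_lt_of_le (hy.1.trans hy.2) with hab | hab
  · obtain rfl : y = a := le_antisymm (hab ▸ hy.2) hy.1
    exact ha
  rw [abs_le] at ha hb ⊢
  obtain ⟨hya, hyb⟩ := hy
  constructor <;> nlinarith

/-- Markov's inequality in degree 2, with constant `deg ^ 2 = 4`. -/
theorem abs_eval_derivative_le_of_natDegree_le_two {p : ℝ[X]} (hp : p.natDegree ≤ 2)
    {a h M : ℝ} (hh : 0 < h) (h₀ : |p.eval a| ≤ M) (h₁ : |p.eval (a + h)| ≤ M)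
    (h₂ : |p.eval (a + 2 * h)| ≤ M) {y : ℝ} (hy : y ∈ Icc a (a + 2 * h)) :
    |p.derivative.eval y| ≤ 4 * M / h := by
  have hend : ∀ z, |p.derivative.eval z * (2 * h)| ≤ 8 * M →
      |p.derivative.eval z| ≤ 4 * M / h := by
    intro z hz
    rw [abs_mul, abs_of_pos (by positivity : (0 : ℝ) < 2 * h)] at hz
    rw [le_div_iff₀ hh]
    linarith
  rw [abs_le] at h₀ h₁ h₂
  refine abs_eval_le_of_natDegree_le_one ?_ (hend a ?_) (hend (a + 2 * h) ?_) hy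
  · have := p.natDegree_derivative_le; omega
  · rw [eval_derivative_left_mul_eq hp, abs_le]
    constructor <;> linarith
  · rw [eval_derivative_right_mul_eq hp, abs_le]
    constructor <;> linarith

theorem abs_eval_sub_le_of_abs_eval_derivative_le {p : ℝ[X]} {s : Set ℝ} (hs : Convex ℝ s)
    {K : ℝ} (hK : ∀ y ∈ s, |p.derivative.eval y| ≤ K) {x y : ℝ} (hx : x ∈ s) (hy : y ∈ s) :
    |p.eval y - p.eval x| ≤ K * |y - x| := by
  simpa only [Real.norm_eq_abs] using hs.norm_image_sub_le_of_norm_hasDerivWithin_le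
    (fun z _ => (p.hasDerivAt z).hasDerivWithinAt) hK hx hy

end Polynomial

theorem integral_const_sub_mul (M K r : ℝ) :
    ∫ t in (0 : ℝ)..r, (M - K * t) = M * r - K * r ^ 2 / 2 := by
  rw [intervalIntegral.integral_sub intervalIntegrable_const
      ((continuous_const_mul K).intervalIntegrable _ _),
    intervalIntegral.integral_const_mul]
  simp
  ring

theorem le_intervalIntegral_of_sub_mul_abs_le {g : ℝ → ℝ} {u v x₀ r M K : ℝ} (hr : 0 ≤ r)
    (hx₀ : x₀ ∈ Icc u v) (hroom : x₀ + r ≤ v ∨ u ≤ x₀ - r)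
    (hg₀ : ∀ t ∈ Icc u v, 0 ≤ g t) (hg : IntervalIntegrable g volume u v)
    (hle : ∀ t ∈ Icc u v, M - K * |t - x₀| ≤ g t) :
    M * r - K * r ^ 2 / 2 ≤ ∫ t in u..v, g t := by
  obtain ⟨c, huc, hcv, htent⟩ : ∃ c, u ≤ c ∧ c + r ≤ v ∧
      ∫ t in c..c + r, (M - K * |t - x₀|) = M * r - K * r ^ 2 / 2 := by
    rcases hroom with hright | hleft
    · refine ⟨x₀, hx₀.1, hright, ?_⟩
      rw [intervalIntegral.integral_congr (g := fun t => M - K * (t - x₀)) fun t ht => by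
          rw [uIcc_of_le (by linarith)] at ht
          simp only [abs_of_nonneg (sub_nonneg.2 ht.1)],
        intervalIntegral.integral_comp_sub_right (fun t => M - K * t), sub_self,
        add_sub_cancel_left, integral_const_sub_mul]
    · refine ⟨x₀ - r, hleft, by linarith [hx₀.2], ?_⟩
      rw [sub_add_cancel, intervalIntegral.integral_congr (g := fun t => M - K * (x₀ - t))
          fun t ht => by
            rw [uIcc_of_le (by linarith)] at ht
            simp only [abs_sub_comm t, abs_of_nonneg (sub_nonneg.2 ht.2)],
        intervalIntegral.integral_comp_sub_left (fun t => M - K * t), sub_self,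
        sub_sub_cancel, integral_const_sub_mul]
  have hg_nonneg : 0 ≤ᵐ[volume.restrict (Ioc u v)] g :=
    (ae_restrict_iff' measurableSet_Ioc).2 <|
      Filter.Eventually.of_forall fun t ht => hg₀ t (Ioc_subset_Icc_self ht)
  calc M * r - K * r ^ 2 / 2 = ∫ t in c..c + r, (M - K * |t - x₀|) := htent.symm
    _ ≤ ∫ t in c..c + r, g t :=
        intervalIntegral.integral_mono_on (by linarith)
          ((by fun_prop : Continuous fun t => M - K * |t - x₀|).intervalIntegrable _ _)
          (hg.mono_set <| by
            rw [uIcc_of_le (by linarith), uIcc_of_le (by linarith)]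
            exact Icc_subset_Icc huc hcv)
          fun t ht => hle t ⟨by linarith [ht.1], by linarith [ht.2]⟩
    _ ≤ ∫ t in u..v, g t :=
        intervalIntegral.integral_mono_interval huc (by linarith) hcv hg_nonneg hg

theorem stmt3 (p : Polynomial ℝ) (hp : p.natDegree ≤ 2) (a h : ℝ) (hh : 0 < h) :
    ∀ x ∈ Icc a (a + 2 * h),
      |p.eval x| ≤ 8 / h * ∫ t in Icc a (a + 2 * h), |p.eval t| := by
  intro x hx
  have hU : a ≤ a + 2 * h := by linarith
  obtain ⟨x₀, hx₀, hmax⟩ :=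
    isCompact_Icc.exists_isMaxOn (nonempty_Icc.2 hU) p.continuous.abs.continuousOn
  set M := |p.eval x₀|
  have hM : ∀ t ∈ Icc a (a + 2 * h), |p.eval t| ≤ M := fun t ht => hmax ht
  have hderiv : ∀ y ∈ Icc a (a + 2 * h), |p.derivative.eval y| ≤ 4 * M / h := fun y hy =>
    abs_eval_derivative_le_of_natDegree_le_two hp hh (hM a ⟨le_rfl, hU⟩)
      (hM _ ⟨by linarith, by linarith⟩) (hM _ ⟨hU, le_rfl⟩) hy
  have hlow : ∀ t ∈ Icc a (a + 2 * h), M - 4 * M / h * |t - x₀| ≤ |p.eval t| := fun t ht => by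
    have hlip := abs_eval_sub_le_of_abs_eval_derivative_le (convex_Icc _ _) hderiv hx₀ ht
    rw [abs_sub_comm] at hlip
    linarith [abs_sub_abs_le_abs_sub (p.eval x₀) (p.eval t)]
  have hroom : x₀ + h / 4 ≤ a + 2 * h ∨ a ≤ x₀ - h / 4 := by
    by_contra! hno
    linarith [hno.1, hno.2]
  have harea : M * (h / 4) - 4 * M / h * (h / 4) ^ 2 / 2 ≤ ∫ t in a..a + 2 * h, |p.eval t| :=
    le_intervalIntegral_of_sub_mul_abs_le (by positivity) hx₀ hroom (fun t _ => abs_nonneg _)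
      (p.continuous.abs.intervalIntegrable _ _) hlow
  rw [integral_Icc_eq_integral_Ioc, ← intervalIntegral.integral_of_le hU]
  calc |p.eval x| ≤ M := hM x hx
    _ = 8 / h * (M * (h / 4) - 4 * M / h * (h / 4) ^ 2 / 2) := by field_simp; ring
    _ ≤ _ := by gcongr
end

section
/- Let p be a polynomial of degree at most 2 on an interval U of length 2h, and let x_M ∈ U be a point where |p| attains its maximum over U. If x_M lies in the left half of U, then for all x with x_M ≤ x < x_M + h/4 one has |p(x)| ≥ (1 - 4(x - x_M)/h) · sup_{y∈U}|p(y)|. -/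
open Set

lemma core_quad (M B C h s : ℝ) (hM : 0 ≤ M) (hh : 0 < h) (hs0 : s ≤ 0) (hsh : -h ≤ s)
    (hb : ∀ u, s ≤ u → u ≤ s + 2*h → |M + B*u + C*u^2| ≤ M) :
    ∀ t, 0 ≤ t → t < h/4 → (1 - 4*t/h)*M ≤ M + B*t + C*t^2 := by
  intro t ht ht4
  rw [show (1 - 4*t/h)*M = ((h-4*t)*M)/h by field_simp, div_le_iff₀ hh]
  rcases le_or_gt C 0 with hC | hC
  · have H := hb (h/2) (by linarith) (by linarith)
    rw [abs_le] at H
    nlinarith [mul_nonneg (mul_nonneg (neg_nonneg.mpr hC) ht) (by linarith : (0:ℝ) ≤ h/2 - t),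
      mul_nonneg ht (by nlinarith [H.1] : (0:ℝ) ≤ 2*M + B*(h/2) + C*(h/2)^2), hh.le,
      mul_nonneg (mul_nonneg (mul_nonneg (neg_nonneg.mpr hC) ht) (by linarith : (0:ℝ) ≤ h/2 - t)) hh.le]
  · rcases eq_or_lt_of_le hs0 with hseq | hslt
    · subst hseq
      have H1 := hb h (by linarith) (by linarith)
      have H2 := hb (2*h) (by linarith) (by linarith)
      rw [abs_le] at H1 H2
      have hBh : 0 ≤ B*h + 4*M := by nlinarith [H1.1, H2.2]
      nlinarith [mul_nonneg ht hBh, mul_nonneg (mul_nonneg hC.le (sq_nonneg t)) hh.le,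
        mul_nonneg (mul_nonneg hC.le ht) ht]
    · exfalso
      have Hm := hb s le_rfl (by linarith)
      have Hp := hb (s+2*h) (by linarith) le_rfl
      rw [abs_le] at Hm Hp
      have e1 : B*s + C*s^2 ≤ 0 := by nlinarith [Hm.2]
      have e2 : B*(s+2*h) + C*(s+2*h)^2 ≤ 0 := by nlinarith [Hp.2]
      have hp2 : (0:ℝ) < s + 2*h := by linarith
      have e3 : (B*s + C*s^2) * (s + 2*h) ≤ 0 :=
        mul_nonpos_of_nonpos_of_nonneg e1 hp2.le
      have e4 : (B*(s+2*h) + C*(s+2*h)^2) * (-s) ≤ 0 :=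
        mul_nonpos_of_nonpos_of_nonneg e2 (by linarith)
      nlinarith [mul_pos (mul_pos (mul_pos hh hC) (neg_pos.mpr hslt)) hp2, e3, e4]

theorem stmt5 (p : Polynomial ℝ) (hp : p.natDegree ≤ 2) (a h : ℝ) (hh : 0 < h)
    (xM : ℝ) (hxM : xM ∈ Icc a (a + 2 * h))
    (hmax : ∀ y ∈ Icc a (a + 2 * h), |p.eval y| ≤ |p.eval xM|)
    (hleft : xM ≤ a + h) :
    ∀ x : ℝ, xM ≤ x → x < xM + h / 4 →
      (1 - 4 * (x - xM) / h) * |p.eval xM| ≤ |p.eval x| := by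
  have h3 : p.natDegree < 3 := by omega
  have hev : ∀ x : ℝ, p.eval x = p.coeff 0 + p.coeff 1 * x + p.coeff 2 * x^2 := by
    intro x
    rw [Polynomial.eval_eq_sum_range' h3]
    simp [Finset.sum_range_succ]
  set B := p.coeff 1 + 2 * p.coeff 2 * xM with hB
  set C := p.coeff 2 with hC
  have hft : ∀ t : ℝ, p.eval (xM + t) = p.eval xM + B*t + C*t^2 := by
    intro t; rw [hev (xM+t), hev xM, hB, hC]; ring
  obtain ⟨hxa, hxb⟩ := hxM
  intro x hx hx'
  have hxt : x = xM + (x - xM) := by ring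
  set M := |p.eval xM| with hM
  have hMnn : 0 ≤ M := abs_nonneg _
  rcases abs_cases (p.eval xM) with ⟨hA, hA0⟩ | ⟨hA, hA0⟩
  · have hbound : ∀ u, a - xM ≤ u → u ≤ (a - xM) + 2*h → |M + B*u + C*u^2| ≤ M := by
      intro u h1 h2
      have hmem : xM + u ∈ Icc a (a + 2*h) := ⟨by linarith, by linarith⟩
      have hle := hmax _ (by simpa [two_mul] using hmem)
      rw [hft] at hle
      rw [hM, hA]
      calc |p.eval xM + B*u + C*u^2| ≤ |p.eval xM| := hle
        _ = p.eval xM := hA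
    have hcore := core_quad M B C h (a - xM) hMnn hh (by linarith) (by linarith) hbound
      (x - xM) (by linarith) (by linarith)
    calc (1 - 4 * (x - xM) / h) * M ≤ M + B*(x - xM) + C*(x - xM)^2 := hcore
      _ = p.eval x := by rw [hM, hA, ← hft, ← hxt]
      _ ≤ |p.eval x| := le_abs_self _
  · have hbound : ∀ u, a - xM ≤ u → u ≤ (a - xM) + 2*h → |M + (-B)*u + (-C)*u^2| ≤ M := by
      intro u h1 h2
      have hmem : xM + u ∈ Icc a (a + 2*h) := ⟨by linarith, by linarith⟩
      have hle := hmax _ (by simpa [two_mul] using hmem)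
      rw [hft] at hle
      have heq : M + (-B)*u + (-C)*u^2 = -(p.eval xM + B*u + C*u^2) := by rw [hM, hA]; ring
      rw [heq, abs_neg]
      exact hle
    have hcore := core_quad M (-B) (-C) h (a - xM) hMnn hh (by linarith) (by linarith) hbound
      (x - xM) (by linarith) (by linarith)
    calc (1 - 4 * (x - xM) / h) * M ≤ M + (-B)*(x - xM) + (-C)*(x - xM)^2 := hcore
      _ = -(p.eval x) := by rw [hM, hA]; nth_rewrite 3 [hxt]; rw [hft]; ring
      _ ≤ |p.eval x| := neg_le_abs _
end

section
/- Let U_1,...,U_I be i.i.d. uniform on [0,1], let s = min_i U_i with density f_s(x) = I(1-x)^{I-1} 1_{[0,1]}(x), and let s' be exponentially distributed with rate I, density f_{s'}(x) = I e^{-Ix} 1_{[0,∞)}(x). Then the squared Hellinger distance satisfies H²(f_s, f_{s'}) ≥ c·I^{-2} for some absolute constant c > 0 and all sufficiently large I. -/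
open Set MeasureTheory

/-! On `[0, 1/(2I)]` the ratio `(1 - x)^(I-1) / e^(-Ix)` is at least `e^(x/2)`, so the two densities
differ there by at least `I x / 4`; as both are at most `I`, their square roots differ by at least
`√I x / 8`. Integrating the resulting bound `I x² / 64` over `[1/(4I), 1/(2I)]` gives `1/(4096 I²)`. -/

lemma exp_neg_div_one_sub_le {x : ℝ} (hx : x < 1) : Real.exp (-(x / (1 - x))) ≤ 1 - x := by
  have h1x : 0 < 1 - x := by linarith
  have key : (1 - x)⁻¹ ≤ Real.exp (x / (1 - x)) := by
    calc (1 - x)⁻¹ = x / (1 - x) + 1 := by field_simp; ring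
      _ ≤ _ := Real.add_one_le_exp _
  rw [Real.exp_neg]
  exact inv_le_of_inv_le₀ h1x key

lemma div_four_le_one_sub_pow_sub_exp {n : ℕ} {x : ℝ} (hx : 0 ≤ x) (hnx : (n + 1) * x ≤ 1 / 2) :
    x / 4 ≤ (1 - x) ^ n - Real.exp (-(n + 1) * x) := by
  have hx1 : x < 1 := by nlinarith
  have h1x : 0 < 1 - x := by linarith
  set b := Real.exp (-(n + 1) * x)
  -- `(n + 1) x - n x / (1 - x)`, a lower bound for the log-ratio of the two sides
  set g := x * (1 - (n + 1) * x) / (1 - x) with hg_def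
  have hb : 1 / 2 ≤ b := by linarith [Real.add_one_le_exp (-(n + 1) * x)]
  have hg : x / 2 ≤ g := by
    rw [le_div_iff₀ h1x]; nlinarith
  have hpow : b * Real.exp g ≤ (1 - x) ^ n :=
    calc b * Real.exp g = Real.exp (-(x / (1 - x))) ^ n := by
          rw [← Real.exp_add, ← Real.exp_nat_mul, hg_def]; congr 1; field_simp; ring
      _ ≤ (1 - x) ^ n := pow_le_pow_left₀ (Real.exp_pos _).le (exp_neg_div_one_sub_le hx1) n
  nlinarith [Real.add_one_le_exp g]

lemma sq_sub_le_four_mul_sq_sqrt_sub_sqrt {a b : ℝ} (ha : 0 ≤ a) (ha1 : a ≤ 1) (hb : 0 ≤ b)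
    (hb1 : b ≤ 1) :
    (a - b) ^ 2 ≤ 4 * (√a - √b) ^ 2 := by
  have hsum : √a + √b ≤ 2 := by
    linarith [Real.sqrt_le_one.mpr ha1, Real.sqrt_le_one.mpr hb1]
  calc (a - b) ^ 2 = (√a ^ 2 - √b ^ 2) ^ 2 := by rw [Real.sq_sqrt ha, Real.sq_sqrt hb]
    _ = (√a - √b) ^ 2 * (√a + √b) ^ 2 := by ring
    _ ≤ (√a - √b) ^ 2 * 2 ^ 2 := by gcongr
    _ = 4 * (√a - √b) ^ 2 := by ring

lemma integrable_sq_sqrt_sub_sqrt {α : Type*} [MeasurableSpace α] {μ : Measure α} {u v : α → ℝ}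
    (hu : Integrable u μ) (hv : Integrable v μ) (hu0 : 0 ≤ᵐ[μ] u) (hv0 : 0 ≤ᵐ[μ] v) :
    Integrable (fun x => (√(u x) - √(v x)) ^ 2) μ := by
  refine (hu.add hv).mono' ?_ ?_
  · exact ((hu.aemeasurable.sqrt.sub hv.aemeasurable.sqrt).pow_const 2).aestronglyMeasurable
  filter_upwards [hu0, hv0] with x hux hvx
  rw [Real.norm_of_nonneg (sq_nonneg _), Pi.add_apply]
  nlinarith [Real.sq_sqrt hux, Real.sq_sqrt hvx, Real.sqrt_nonneg (u x), Real.sqrt_nonneg (v x)]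

noncomputable def minUniformDensity (I : ℕ) : ℝ → ℝ :=
  indicator (Icc 0 1) fun x => I * (1 - x) ^ (I - 1)

noncomputable def expDensity (I : ℕ) : ℝ → ℝ :=
  indicator (Ici 0) fun x => I * Real.exp (-I * x)

lemma minUniformDensity_nonneg (I : ℕ) : 0 ≤ minUniformDensity I :=
  indicator_nonneg fun _ hx => mul_nonneg (Nat.cast_nonneg I) (pow_nonneg (sub_nonneg.2 hx.2) _)

lemma expDensity_nonneg (I : ℕ) : 0 ≤ expDensity I :=
  indicator_nonneg fun _ _ => by positivity

lemma integrable_minUniformDensity (I : ℕ) : Integrable (minUniformDensity I) :=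
  (Continuous.integrableOn_Icc (by fun_prop)).integrable_indicator measurableSet_Icc

lemma integrable_expDensity {I : ℕ} (hI : 0 < I) : Integrable (expDensity I) := by
  refine IntegrableOn.integrable_indicator ?_ measurableSet_Ici
  rw [integrableOn_Ici_iff_integrableOn_Ioi]
  exact (exp_neg_integrableOn_Ioi 0 (Nat.cast_pos.2 hI)).const_mul _

lemma mul_sq_div_le_sq_sqrt_minUniformDensity_sub_sqrt_expDensity {n : ℕ} {x : ℝ} (hx : 0 ≤ x)
    (hnx : (n + 1) * x ≤ 1 / 2) :
    (n + 1) * x ^ 2 / 64 ≤ (√(minUniformDensity (n + 1) x) - √(expDensity (n + 1) x)) ^ 2 := by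
  have hx1 : x ≤ 1 := by nlinarith
  have hn : (0 : ℝ) < n + 1 := by positivity
  set a := (1 - x) ^ n
  set b := Real.exp (-(n + 1) * x)
  have hab := div_four_le_one_sub_pow_sub_exp hx hnx
  have ha1 : a ≤ 1 := pow_le_one₀ (by linarith) (by linarith)
  have hb1 : b ≤ 1 := Real.exp_le_one_iff.2 (by nlinarith)
  have hsq := sq_sub_le_four_mul_sq_sqrt_sub_sqrt (by positivity) ha1 (Real.exp_pos _).le hb1
  rw [minUniformDensity, expDensity, indicator_of_mem (mem_Icc.2 ⟨hx, hx1⟩),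
    indicator_of_mem (mem_Ici.2 hx)]
  push_cast
  rw [Real.sqrt_mul hn.le, Real.sqrt_mul hn.le, ← mul_sub, mul_pow, Real.sq_sqrt hn.le]
  have : (x / 4) ^ 2 ≤ (a - b) ^ 2 := pow_le_pow_left₀ (by positivity) hab 2
  nlinarith

theorem stmt11 : ∃ c : ℝ, 0 < c ∧ ∃ I₀ : ℕ, ∀ I : ℕ, I₀ ≤ I →
    c / (I : ℝ) ^ 2 ≤
      ∫ x, (Real.sqrt (Set.indicator (Icc (0:ℝ) 1)
          (fun x => (I : ℝ) * (1 - x) ^ (I - 1)) x) -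
        Real.sqrt (Set.indicator (Ici (0:ℝ))
          (fun x => (I : ℝ) * Real.exp (-(I : ℝ) * x)) x)) ^ 2 := by
  refine ⟨1 / 4096, by norm_num, 1, fun I hI => ?_⟩
  change _ ≤ ∫ x, (√(minUniformDensity I x) - √(expDensity I x)) ^ 2
  obtain ⟨n, rfl⟩ : ∃ n, I = n + 1 := ⟨I - 1, by omega⟩
  set s := Icc (1 / (4 * (n + 1 : ℝ))) (1 / (2 * (n + 1)))
  have hF := integrable_sq_sqrt_sub_sqrt (integrable_minUniformDensity (n + 1))
    (integrable_expDensity n.succ_pos) (ae_of_all _ (minUniformDensity_nonneg _))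
    (ae_of_all _ (expDensity_nonneg _))
  have hlow : ∀ x ∈ s, 1 / (1024 * (n + 1 : ℝ)) ≤
      (√(minUniformDensity (n + 1) x) - √(expDensity (n + 1) x)) ^ 2 := by
    rintro x ⟨hx1, hx2⟩
    have hx : 0 ≤ x := le_trans (by positivity) hx1
    refine le_trans ?_ (mul_sq_div_le_sq_sqrt_minUniformDensity_sub_sqrt_expDensity hx ?_)
    · rw [div_le_iff₀ (by positivity)] at hx1
      rw [div_le_div_iff₀ (by positivity) (by positivity)]
      nlinarith
    · rw [le_div_iff₀ (by positivity)] at hx2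
      linarith
  calc 1 / 4096 / ((n + 1 : ℕ) : ℝ) ^ 2 = 1 / (1024 * (n + 1 : ℝ)) * (volume s).toReal := by
        rw [Real.volume_Icc, ENNReal.toReal_ofReal (sub_nonneg.2 (by gcongr; norm_num))]
        push_cast; field_simp; ring
    _ ≤ ∫ x in s, (√(minUniformDensity (n + 1) x) - √(expDensity (n + 1) x)) ^ 2 :=
        setIntegral_ge_of_const_le_real measurableSet_Icc measure_Icc_lt_top.ne hlow hF.integrableOn
    _ ≤ _ := setIntegral_le_integral hF (ae_of_all _ fun _ => sq_nonneg _)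
end

section
/- Let X₁ and X₂ be independent Poisson point processes on S = [0,1] × ℝ with intensities λ₁(x,y) = f_D(x) n J₁ 1_{\{y ≤ θ(x)\}} and λ₂(x,y) = f_D(x) n J₂ 1_{\{y ≥ θ(x)\}} restricted to a bounded band, for boundary functions θ = θ₁ and θ = θ₂. Then the squared Hellinger distance between the two joint observation laws equals 2(1 - exp(-(n/2)(J₁+J₂) ∫₀¹ |θ₁(x) - θ₂(x)| f_D(x) dx)). -/
/-!
Both joint laws have densities with respect to a common reference measure, and for
probability measures `P = p • R`, `Q = q • R` one has `H²(P, Q) = 2 - 2 ∫ √(p q) dR`.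
A Poisson process with finite intensity `f • ρ` has density `e^{-∫ f} ∏ᵢ f(xᵢ)` with respect to
`∑ₙ ρ^⊗ⁿ / n!`, so the affinity `∫ √(p q)` of two such processes is
`exp (∫ √(f g) - (∫ f + ∫ g) / 2) = exp (-½ ∫ (√f - √g)²)`, and affinities multiply over
independent pairs. For the band intensities, `(√λ_{θ₁} - √λ_{θ₂})²` is `f_D n J` times the
indicator of the region between the graphs of `θ₁` and `θ₂`, whose vertical sections have
length `|θ₁ - θ₂|`.
-/

open Set MeasureTheory

/-- The law of a Poisson point process with finite intensity measure `ν`, represented on the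
space of finite ordered point configurations `(n : ℕ) × (Fin n → E)`. -/
noncomputable def pppLaw {E : Type*} [MeasurableSpace E] (ν : Measure E) [SigmaFinite ν] :
    Measure ((n : ℕ) × (Fin n → E)) :=
  Measure.sum (fun n => (ENNReal.ofReal (Real.exp (-(ν Set.univ).toReal)) / n.factorial) •
    Measure.map (Sigma.mk n) (Measure.pi (fun _ : Fin n => ν)))

/-- Squared Hellinger distance between two measures. -/
noncomputable def hellingerSq {Ω : Type*} [MeasurableSpace Ω] (P Q : Measure Ω) : ℝ :=
  ∫ ω, (Real.sqrt ((P.rnDeriv (P + Q)) ω).toReal -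
    Real.sqrt ((Q.rnDeriv (P + Q)) ω).toReal) ^ 2 ∂(P + Q)

/-- Intensity measure of the lower Poisson point process in the band
`S = [0,1] × [-C-1, C+1]`, with points below the graph of `θ`:
`λ₁(x,y) = f_D(x) n J₁ 1_{-C-1 ≤ y ≤ θ(x)}`. -/
noncomputable def lowerIntensity (C J₁ : ℝ) (fD : ℝ → ℝ) (n : ℕ) (θ : ℝ → ℝ) :
    Measure (ℝ × ℝ) :=
  (volume : Measure (ℝ × ℝ)).withDensity fun z =>
    ENNReal.ofReal (Set.indicator
      {z : ℝ × ℝ | z.1 ∈ Icc (0:ℝ) 1 ∧ z.2 ∈ Icc (-C - 1) (θ z.1)}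
      (fun z => fD z.1 * n * J₁) z)

/-- Intensity measure of the upper Poisson point process: points above the graph of `θ`. -/
noncomputable def upperIntensity (C J₂ : ℝ) (fD : ℝ → ℝ) (n : ℕ) (θ : ℝ → ℝ) :
    Measure (ℝ × ℝ) :=
  (volume : Measure (ℝ × ℝ)).withDensity fun z =>
    ENNReal.ofReal (Set.indicator
      {z : ℝ × ℝ | z.1 ∈ Icc (0:ℝ) 1 ∧ z.2 ∈ Icc (θ z.1) (C + 1)}
      (fun z => fD z.1 * n * J₂) z)

open scoped ENNReal symmDiff

lemma ENNReal.tsum_pow_div_factorial {r : ℝ≥0∞} (hr : r ≠ ∞) :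
    ∑' n : ℕ, r ^ n / (n.factorial : ℝ≥0∞) = ENNReal.ofReal (Real.exp r.toReal) := by
  rw [Real.exp_eq_exp_ℝ, NormedSpace.exp_eq_tsum_div, ENNReal.ofReal_tsum_of_nonneg
    (fun n => by positivity) (Real.summable_pow_div_factorial _)]
  refine tsum_congr fun n => ?_
  rw [ENNReal.ofReal_div_of_pos (by positivity), ENNReal.ofReal_pow ENNReal.toReal_nonneg,
    ENNReal.ofReal_toReal hr, ENNReal.ofReal_natCast]

lemma ENNReal.mul_self_rpow_inv_two (x : ℝ≥0∞) : (x * x) ^ (2⁻¹ : ℝ) = x := by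
  rw [← sq, ← ENNReal.rpow_natCast, ← ENNReal.rpow_mul]
  norm_num

lemma ENNReal.ofReal_sqrt_sub_sq_add {a b : ℝ≥0∞} (ha : a ≠ ∞) (hb : b ≠ ∞) :
    ENNReal.ofReal ((√a.toReal - √b.toReal) ^ 2) + 2 * (a * b) ^ (2⁻¹ : ℝ) = a + b := by
  obtain ⟨x, hx, rfl⟩ : ∃ x, 0 ≤ x ∧ a = ENNReal.ofReal x :=
    ⟨a.toReal, ENNReal.toReal_nonneg, (ENNReal.ofReal_toReal ha).symm⟩
  obtain ⟨y, hy, rfl⟩ : ∃ y, 0 ≤ y ∧ b = ENNReal.ofReal y :=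
    ⟨b.toReal, ENNReal.toReal_nonneg, (ENNReal.ofReal_toReal hb).symm⟩
  have hsqrt : (ENNReal.ofReal x * ENNReal.ofReal y) ^ (2⁻¹ : ℝ) = ENNReal.ofReal (√x * √y) := by
    rw [← ENNReal.ofReal_mul hx, ENNReal.ofReal_rpow_of_nonneg (mul_nonneg hx hy) (by norm_num),
      ← Real.sqrt_mul hx, Real.sqrt_eq_rpow, one_div]
  rw [hsqrt, ENNReal.toReal_ofReal hx, ENNReal.toReal_ofReal hy, ← ENNReal.ofReal_ofNat 2,
    ← ENNReal.ofReal_mul zero_le_two, ← ENNReal.ofReal_add (sq_nonneg _) (by positivity),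
    ← ENNReal.ofReal_add hx hy]
  congr 1
  nlinarith [Real.sq_sqrt hx, Real.sq_sqrt hy]

lemma sqrt_indicator_sub_sq {α : Type*} {w : α → ℝ} (hw : ∀ z, 0 ≤ w z) (A B : Set α) (z : α) :
    (√(A.indicator w z) - √(B.indicator w z)) ^ 2 = (A ∆ B).indicator w z := by
  by_cases hA : z ∈ A <;> by_cases hB : z ∈ B <;>
    simp [hA, hB, Set.mem_symmDiff, Real.sq_sqrt (hw z)]

section SigmaMeasurable

variable {α : Type*} {β : α → Type*} [∀ a, MeasurableSpace (β a)]

lemma measurable_sigma_mk (a : α) : Measurable (Sigma.mk (β := β) a) :=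
  measurable_iff_le_map.2 (iInf_le _ a)

lemma measurable_sigma_of_forall {γ : Type*} [MeasurableSpace γ] {f : (Σ a, β a) → γ}
    (hf : ∀ a, Measurable fun x => f ⟨a, x⟩) : Measurable f :=
  fun _ hs => MeasurableSpace.measurableSet_iInf.2 fun a => hf a hs

end SigmaMeasurable

lemma lintegral_fin_nat_prod_eq_prod {E : Type*} [MeasurableSpace E] {n : ℕ}
    {μ : Fin n → Measure E} [∀ i, SigmaFinite (μ i)] {f : Fin n → E → ℝ≥0∞}
    (hf : ∀ i, Measurable (f i)) :
    ∫⁻ x : Fin n → E, ∏ i, f i (x i) ∂(Measure.pi μ) = ∏ i, ∫⁻ x, f i x ∂(μ i) := by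
  induction n with
  | zero => simp
  | succ n ih =>
    have hmeas : Measurable fun x : Fin (n + 1) → E => ∏ i, f i (x i) :=
      Finset.measurable_prod _ fun i _ => (hf i).comp (measurable_pi_apply i)
    have hinsert (y : E) (x : Fin n → E) :
        ∏ i, f i (Fin.insertNth (α := fun _ => E) 0 y x i)
          = f 0 y * ∏ i : Fin n, f i.succ (x i) := by
      simp [Fin.prod_univ_succ]
    calc
      _ = ∫⁻ z : E × (Fin n → E), f 0 z.1 * ∏ i : Fin n, f i.succ (z.2 i)
          ∂((μ 0).prod (Measure.pi fun i => μ i.succ)) := by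
        rw [← ((measurePreserving_piFinSuccAbove μ 0).symm).lintegral_comp hmeas]
        exact lintegral_congr fun z => hinsert z.1 z.2
      _ = (∫⁻ x, f 0 x ∂μ 0) * ∏ i : Fin n, ∫⁻ x, f i.succ x ∂(μ i.succ) := by
        have hmeas' : Measurable fun x : Fin n → E => ∏ i, f i.succ (x i) :=
          Finset.measurable_prod _ fun i _ => (hf i.succ).comp (measurable_pi_apply i)
        rw [← ih fun i => hf i.succ, lintegral_prod_mul (hf 0).aemeasurable hmeas'.aemeasurable]
      _ = ∏ i, ∫⁻ x, f i x ∂(μ i) := by rw [Fin.prod_univ_succ]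

lemma pi_withDensity {E : Type*} [MeasurableSpace E] {n : ℕ}
    {μ : Fin n → Measure E} [∀ i, SigmaFinite (μ i)] {f : Fin n → E → ℝ≥0∞}
    (hf : ∀ i, Measurable (f i)) [∀ i, SigmaFinite ((μ i).withDensity (f i))] :
    Measure.pi (fun i => (μ i).withDensity (f i))
      = (Measure.pi μ).withDensity fun x => ∏ i, f i (x i) := by
  refine Measure.pi_eq fun s hs => ?_
  have hind : (Set.univ.pi s).indicator (fun x => ∏ i, f i (x i))
      = fun x => ∏ i, (s i).indicator (f i) (x i) := by
    classical
    funext x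
    simp only [Set.indicator, Set.mem_univ_pi, Finset.prod_ite_zero, Finset.mem_univ, true_imp_iff]
  rw [withDensity_apply _ (.univ_pi hs), ← lintegral_indicator (.univ_pi hs), hind,
    lintegral_fin_nat_prod_eq_prod fun i => (hf i).indicator (hs i)]
  simp_rw [lintegral_indicator (hs _), withDensity_apply _ (hs _)]

section Hellinger

variable {Ω : Type*} [MeasurableSpace Ω]

lemma hellingerSq_eq_sub (P Q : Measure Ω) [IsFiniteMeasure P] [IsFiniteMeasure Q] :
    hellingerSq P Q = (P Set.univ).toReal + (Q Set.univ).toReal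
      - 2 * (∫⁻ ω, (P.rnDeriv (P + Q) ω * Q.rnDeriv (P + Q) ω) ^ (2⁻¹ : ℝ) ∂(P + Q)).toReal := by
  set p := P.rnDeriv (P + Q)
  set q := Q.rnDeriv (P + Q)
  have hp : Measurable p := Measure.measurable_rnDeriv _ _
  have hq : Measurable q := Measure.measurable_rnDeriv _ _
  have hpq : Measurable fun ω => (p ω * q ω) ^ (2⁻¹ : ℝ) := (hp.mul hq).pow_const _
  have hP : P ≪ P + Q := Measure.absolutelyContinuous_of_le (Measure.le_add_right le_rfl)
  have hQ : Q ≪ P + Q := Measure.absolutelyContinuous_of_le (Measure.le_add_left le_rfl)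
  have hsplit : ∫⁻ ω, ENNReal.ofReal ((√(p ω).toReal - √(q ω).toReal) ^ 2) ∂(P + Q)
      + 2 * ∫⁻ ω, (p ω * q ω) ^ (2⁻¹ : ℝ) ∂(P + Q) = P Set.univ + Q Set.univ := by
    rw [← lintegral_const_mul _ hpq, ← lintegral_add_right _ (hpq.const_mul _),
      ← Measure.lintegral_rnDeriv hP, ← Measure.lintegral_rnDeriv hQ, ← lintegral_add_left hp]
    refine lintegral_congr_ae ?_
    filter_upwards [Measure.rnDeriv_ne_top P (P + Q), Measure.rnDeriv_ne_top Q (P + Q)]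
      with ω hpω hqω using ENNReal.ofReal_sqrt_sub_sq_add hpω hqω
  obtain ⟨hD, hB⟩ := ENNReal.add_ne_top.1 (hsplit ▸ ENNReal.add_ne_top.2
    ⟨measure_ne_top P _, measure_ne_top Q _⟩)
  have hreal := congrArg ENNReal.toReal hsplit
  rw [ENNReal.toReal_add hD hB, ENNReal.toReal_add (measure_ne_top P _) (measure_ne_top Q _),
    ENNReal.toReal_mul, ENNReal.toReal_ofNat] at hreal
  rw [hellingerSq, integral_eq_lintegral_of_nonneg_ae (ae_of_all _ fun _ => sq_nonneg _)
    (by fun_prop), ← hreal]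
  ring

lemma rnDeriv_withDensity_eq_div (μ : Measure Ω) {u w : Ω → ℝ≥0∞} (hu : Measurable u)
    (hw : Measurable w) (huw : ∀ ω, u ω ≤ w ω) (hw_top : ∀ ω, w ω ≠ ∞)
    [SigmaFinite (μ.withDensity w)] :
    (μ.withDensity u).rnDeriv (μ.withDensity w) =ᵐ[μ.withDensity w] u / w := by
  refine (Measure.eq_rnDeriv (hu.div hw) Measure.MutuallySingular.zero_left ?_).symm
  rw [zero_add, ← withDensity_mul μ hw (hu.div hw)]
  congr 1
  funext ω
  by_cases h0 : w ω = 0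
  · simp [h0, nonpos_iff_eq_zero.1 (h0 ▸ huw ω)]
  · exact (ENNReal.mul_div_cancel h0 (hw_top ω)).symm

lemma lintegral_rpow_rnDeriv_withDensity (μ : Measure Ω) {f g : Ω → ℝ≥0∞} (hf : Measurable f)
    (hg : Measurable g) (hf_top : ∀ ω, f ω ≠ ∞) (hg_top : ∀ ω, g ω ≠ ∞)
    [IsFiniteMeasure (μ.withDensity f)] [IsFiniteMeasure (μ.withDensity g)] :
    ∫⁻ ω, ((μ.withDensity f).rnDeriv (μ.withDensity f + μ.withDensity g) ω
        * (μ.withDensity g).rnDeriv (μ.withDensity f + μ.withDensity g) ω) ^ (2⁻¹ : ℝ)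
        ∂(μ.withDensity f + μ.withDensity g)
      = ∫⁻ ω, (f ω * g ω) ^ (2⁻¹ : ℝ) ∂μ := by
  have hsum : μ.withDensity f + μ.withDensity g = μ.withDensity (f + g) :=
    (withDensity_add_left hf g).symm
  have hsum_top (ω : Ω) : (f + g) ω ≠ ∞ := ENNReal.add_ne_top.2 ⟨hf_top ω, hg_top ω⟩
  have : IsFiniteMeasure (μ.withDensity (f + g)) := hsum ▸ inferInstance
  have hp := rnDeriv_withDensity_eq_div μ hf (hf.add hg) (fun ω => le_self_add) hsum_top
  have hq := rnDeriv_withDensity_eq_div μ hg (hf.add hg) (fun ω => le_add_self) hsum_top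
  have hm : Measurable fun ω => ((f / (f + g)) ω * (g / (f + g)) ω) ^ (2⁻¹ : ℝ) :=
    ((hf.div (hf.add hg)).mul (hg.div (hf.add hg))).pow_const _
  rw [hsum, lintegral_congr_ae (by filter_upwards [hp, hq] with ω hpω hqω; rw [hpω, hqω]),
    lintegral_withDensity_eq_lintegral_mul _ (hf.add hg) hm]
  refine lintegral_congr fun ω => ?_
  simp only [Pi.mul_apply, Pi.div_apply, Pi.add_apply]
  by_cases h0 : f ω + g ω = 0
  · obtain ⟨hf0, hg0⟩ := add_eq_zero.1 h0
    simp [hf0, hg0]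
  · rw [ENNReal.div_eq_inv_mul, ENNReal.div_eq_inv_mul, mul_mul_mul_comm,
      ENNReal.mul_rpow_of_nonneg _ _ (by norm_num), ENNReal.mul_self_rpow_inv_two,
      ← mul_assoc, ENNReal.mul_inv_cancel h0 (hsum_top ω), one_mul]

lemma hellingerSq_withDensity (μ : Measure Ω) {f g : Ω → ℝ≥0∞} (hf : Measurable f)
    (hg : Measurable g) (hf_top : ∀ ω, f ω ≠ ∞) (hg_top : ∀ ω, g ω ≠ ∞)
    [IsProbabilityMeasure (μ.withDensity f)] [IsProbabilityMeasure (μ.withDensity g)] :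
    hellingerSq (μ.withDensity f) (μ.withDensity g)
      = 2 * (1 - (∫⁻ ω, (f ω * g ω) ^ (2⁻¹ : ℝ) ∂μ).toReal) := by
  rw [hellingerSq_eq_sub, lintegral_rpow_rnDeriv_withDensity μ hf hg hf_top hg_top,
    measure_univ, measure_univ, ENNReal.toReal_one]
  ring

end Hellinger

section HellingerProd

variable {E F : Type*} [MeasurableSpace E] [MeasurableSpace F]

lemma hellingerSq_prod_withDensity (μ : Measure E) (ν : Measure F) [SFinite ν]
    {f₁ f₂ : E → ℝ≥0∞} {g₁ g₂ : F → ℝ≥0∞} (hf₁ : Measurable f₁) (hf₂ : Measurable f₂)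
    (hg₁ : Measurable g₁) (hg₂ : Measurable g₂) (hf₁_top : ∀ x, f₁ x ≠ ∞)
    (hf₂_top : ∀ x, f₂ x ≠ ∞) (hg₁_top : ∀ y, g₁ y ≠ ∞) (hg₂_top : ∀ y, g₂ y ≠ ∞)
    [IsProbabilityMeasure (μ.withDensity f₁)] [IsProbabilityMeasure (μ.withDensity f₂)]
    [IsProbabilityMeasure (ν.withDensity g₁)] [IsProbabilityMeasure (ν.withDensity g₂)] :
    hellingerSq ((μ.withDensity f₁).prod (ν.withDensity g₁))
        ((μ.withDensity f₂).prod (ν.withDensity g₂))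
      = 2 * (1 - ((∫⁻ x, (f₁ x * f₂ x) ^ (2⁻¹ : ℝ) ∂μ)
          * ∫⁻ y, (g₁ y * g₂ y) ^ (2⁻¹ : ℝ) ∂ν).toReal) := by
  have h₁ := prod_withDensity (μ := μ) (ν := ν) hf₁ hg₁
  have h₂ := prod_withDensity (μ := μ) (ν := ν) hf₂ hg₂
  have : IsProbabilityMeasure ((μ.prod ν).withDensity fun z => f₁ z.1 * g₁ z.2) :=
    h₁ ▸ inferInstance
  have : IsProbabilityMeasure ((μ.prod ν).withDensity fun z => f₂ z.1 * g₂ z.2) :=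
    h₂ ▸ inferInstance
  have hF₁ : Measurable fun z : E × F => f₁ z.1 * g₁ z.2 := by fun_prop
  have hF₂ : Measurable fun z : E × F => f₂ z.1 * g₂ z.2 := by fun_prop
  rw [h₁, h₂, hellingerSq_withDensity _ hF₁ hF₂
    (fun z => ENNReal.mul_ne_top (hf₁_top z.1) (hg₁_top z.2))
    (fun z => ENNReal.mul_ne_top (hf₂_top z.1) (hg₂_top z.2)),
    ← lintegral_prod_mul (by fun_prop) (by fun_prop)]
  simp_rw [mul_mul_mul_comm _ (g₁ _), ENNReal.mul_rpow_of_nonneg _ _ (by norm_num : (0:ℝ) ≤ 2⁻¹)]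

end HellingerProd

section Poisson

variable {E : Type*} [MeasurableSpace E]

/-- The measure `∑ₙ ρ^⊗ⁿ / n!` on configurations; `pppLaw ν = e^{-ν(E)} • pppBase ν` for
finite `ν`. -/
noncomputable def pppBase (ρ : Measure E) : Measure ((n : ℕ) × (Fin n → E)) :=
  Measure.sum fun n => (n.factorial : ℝ≥0∞)⁻¹ •
    Measure.map (Sigma.mk n) (Measure.pi fun _ : Fin n => ρ)

instance (ρ : Measure E) [SigmaFinite ρ] : SFinite (pppBase ρ) := by
  unfold pppBase
  infer_instance

noncomputable def poissonDensity (ρ : Measure E) (f : E → ℝ≥0∞) (p : (n : ℕ) × (Fin n → E)) :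
    ℝ≥0∞ :=
  ENNReal.ofReal (Real.exp (-(∫⁻ x, f x ∂ρ).toReal)) * ∏ i, f (p.2 i)

lemma measurable_prod_apply {n : ℕ} {g : E → ℝ≥0∞} (hg : Measurable g) :
    Measurable fun x : Fin n → E => ∏ i, g (x i) :=
  Finset.measurable_prod _ fun i _ => hg.comp (measurable_pi_apply i)

lemma measurable_prod_comp_snd {g : E → ℝ≥0∞} (hg : Measurable g) :
    Measurable fun p : (n : ℕ) × (Fin n → E) => ∏ i, g (p.2 i) :=
  measurable_sigma_of_forall fun _ => measurable_prod_apply hg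

lemma poissonDensity_ne_top (ρ : Measure E) {f : E → ℝ≥0∞} (hf_top : ∀ x, f x ≠ ∞)
    (p : (n : ℕ) × (Fin n → E)) : poissonDensity ρ f p ≠ ∞ :=
  ENNReal.mul_ne_top ENNReal.ofReal_ne_top (ENNReal.prod_ne_top fun _ _ => hf_top _)

lemma measurable_poissonDensity (ρ : Measure E) {f : E → ℝ≥0∞} (hf : Measurable f) :
    Measurable (poissonDensity ρ f) :=
  (measurable_prod_comp_snd hf).const_mul _

lemma lintegral_prod_pppBase (ρ : Measure E) [SigmaFinite ρ] {g : E → ℝ≥0∞}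
    (hg : Measurable g) (hg_fin : ∫⁻ x, g x ∂ρ ≠ ∞) :
    ∫⁻ p, ∏ i, g (p.2 i) ∂(pppBase ρ) = ENNReal.ofReal (Real.exp (∫⁻ x, g x ∂ρ).toReal) := by
  rw [pppBase, lintegral_sum_measure, ← ENNReal.tsum_pow_div_factorial hg_fin]
  refine tsum_congr fun n => ?_
  rw [lintegral_smul_measure, lintegral_map (measurable_prod_comp_snd hg) (measurable_sigma_mk n),
    lintegral_fin_nat_prod_eq_prod fun _ => hg, Finset.prod_const, Finset.card_univ,
    Fintype.card_fin, smul_eq_mul, ENNReal.div_eq_inv_mul]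

lemma pppLaw_withDensity (ρ : Measure E) [SigmaFinite ρ] {f : E → ℝ≥0∞} (hf : Measurable f)
    [IsFiniteMeasure (ρ.withDensity f)] :
    pppLaw (ρ.withDensity f) = (pppBase ρ).withDensity (poissonDensity ρ f) := by
  rw [pppBase, withDensity_sum, pppLaw]
  congr 1
  funext n
  ext s hs
  rw [withDensity_smul_measure, Measure.smul_apply, Measure.smul_apply,
    Measure.map_apply (measurable_sigma_mk n) hs, withDensity_apply _ hs,
    setLIntegral_map hs (measurable_poissonDensity ρ hf) (measurable_sigma_mk n),
    pi_withDensity fun _ => hf, withDensity_apply _ (measurable_sigma_mk n hs)]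
  simp_rw [poissonDensity, withDensity_apply _ MeasurableSet.univ, Measure.restrict_univ]
  rw [lintegral_const_mul _ (measurable_prod_apply hf),
    smul_eq_mul, smul_eq_mul, ← mul_assoc, ENNReal.div_eq_inv_mul, mul_comm]

instance isProbabilityMeasure_pppLaw (ν : Measure E) [IsFiniteMeasure ν] :
    IsProbabilityMeasure (pppLaw ν) := by
  constructor
  simp_rw [pppLaw, Measure.sum_apply _ MeasurableSet.univ, Measure.smul_apply,
    Measure.map_apply (measurable_sigma_mk _) MeasurableSet.univ, Set.preimage_univ,
    Measure.pi_univ, Finset.prod_const, Finset.card_univ, Fintype.card_fin, smul_eq_mul,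
    div_eq_mul_inv, mul_right_comm _ _ (ν univ ^ _), mul_assoc, ENNReal.tsum_mul_left,
    ← div_eq_mul_inv, ENNReal.tsum_pow_div_factorial (measure_ne_top ν _),
    ← ENNReal.ofReal_mul (Real.exp_nonneg _),
    ← Real.exp_add, neg_add_cancel, Real.exp_zero, ENNReal.ofReal_one]

lemma lintegral_ne_top_of_isFiniteMeasure_withDensity (μ : Measure E) (f : E → ℝ≥0∞)
    [IsFiniteMeasure (μ.withDensity f)] : ∫⁻ x, f x ∂μ ≠ ∞ := by
  simpa using measure_ne_top (μ.withDensity f) Set.univ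

noncomputable def sqrtDistSq (ρ : Measure E) (f g : E → ℝ≥0∞) : ℝ≥0∞ :=
  ∫⁻ x, ENNReal.ofReal ((√(f x).toReal - √(g x).toReal) ^ 2) ∂ρ

lemma sqrtDistSq_add_two_mul_lintegral_rpow (ρ : Measure E) {f g : E → ℝ≥0∞}
    (hf : Measurable f) (hg : Measurable g) (hf_top : ∀ x, f x ≠ ∞) (hg_top : ∀ x, g x ≠ ∞) :
    sqrtDistSq ρ f g + 2 * ∫⁻ x, (f x * g x) ^ (2⁻¹ : ℝ) ∂ρ = ∫⁻ x, f x ∂ρ + ∫⁻ x, g x ∂ρ := by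
  rw [sqrtDistSq, ← lintegral_const_mul _ (by fun_prop), ← lintegral_add_right _ (by fun_prop),
    ← lintegral_add_left hf]
  exact lintegral_congr fun x => ENNReal.ofReal_sqrt_sub_sq_add (hf_top x) (hg_top x)

lemma lintegral_rpow_poissonDensity (ρ : Measure E) [SigmaFinite ρ] {f g : E → ℝ≥0∞}
    (hf : Measurable f) (hg : Measurable g) (hf_top : ∀ x, f x ≠ ∞) (hg_top : ∀ x, g x ≠ ∞)
    (hf_fin : ∫⁻ x, f x ∂ρ ≠ ∞) (hg_fin : ∫⁻ x, g x ∂ρ ≠ ∞) :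
    ∫⁻ p, (poissonDensity ρ f p * poissonDensity ρ g p) ^ (2⁻¹ : ℝ) ∂(pppBase ρ)
      = ENNReal.ofReal (Real.exp (-(sqrtDistSq ρ f g).toReal / 2)) := by
  have hsplit := sqrtDistSq_add_two_mul_lintegral_rpow ρ hf hg hf_top hg_top
  obtain ⟨hD, hB⟩ := ENNReal.add_ne_top.1 (hsplit ▸ ENNReal.add_ne_top.2 ⟨hf_fin, hg_fin⟩)
  have hreal := congrArg ENNReal.toReal hsplit
  rw [ENNReal.toReal_add hD hB, ENNReal.toReal_add hf_fin hg_fin, ENNReal.toReal_mul,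
    ENNReal.toReal_ofNat] at hreal
  have hfactor (p : (n : ℕ) × (Fin n → E)) :
      (poissonDensity ρ f p * poissonDensity ρ g p) ^ (2⁻¹ : ℝ)
        = ENNReal.ofReal (Real.exp (-((∫⁻ x, f x ∂ρ).toReal + (∫⁻ x, g x ∂ρ).toReal) / 2))
          * ∏ i, (f (p.2 i) * g (p.2 i)) ^ (2⁻¹ : ℝ) := by
    rw [poissonDensity, poissonDensity, mul_mul_mul_comm, ← Finset.prod_mul_distrib,
      ENNReal.mul_rpow_of_nonneg _ _ (by norm_num), ENNReal.prod_rpow_of_nonneg (by norm_num),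
      ← ENNReal.ofReal_mul (Real.exp_nonneg _), ← Real.exp_add,
      ENNReal.ofReal_rpow_of_nonneg (Real.exp_nonneg _) (by norm_num), ← Real.exp_mul]
    ring_nf
  have hB_fin : ∫⁻ x, (f x * g x) ^ (2⁻¹ : ℝ) ∂ρ ≠ ∞ := fun h =>
    hB (ENNReal.mul_eq_top.2 (.inl ⟨two_ne_zero, h⟩))
  rw [lintegral_congr hfactor, lintegral_const_mul _
      (measurable_prod_comp_snd (g := fun x => (f x * g x) ^ (2⁻¹ : ℝ)) (by fun_prop)),
    lintegral_prod_pppBase ρ (by fun_prop) hB_fin, ← ENNReal.ofReal_mul (Real.exp_nonneg _),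
    ← Real.exp_add]
  congr 2
  linarith

variable {F : Type*} [MeasurableSpace F]

lemma hellingerSq_prod_pppLaw (ρ : Measure E) (σ : Measure F) [SigmaFinite ρ] [SigmaFinite σ]
    {f₁ f₂ : E → ℝ≥0∞} {g₁ g₂ : F → ℝ≥0∞} (hf₁ : Measurable f₁) (hf₂ : Measurable f₂)
    (hg₁ : Measurable g₁) (hg₂ : Measurable g₂) (hf₁_top : ∀ x, f₁ x ≠ ∞)
    (hf₂_top : ∀ x, f₂ x ≠ ∞) (hg₁_top : ∀ y, g₁ y ≠ ∞) (hg₂_top : ∀ y, g₂ y ≠ ∞)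
    [IsFiniteMeasure (ρ.withDensity f₁)] [IsFiniteMeasure (ρ.withDensity f₂)]
    [IsFiniteMeasure (σ.withDensity g₁)] [IsFiniteMeasure (σ.withDensity g₂)] :
    hellingerSq ((pppLaw (ρ.withDensity f₁)).prod (pppLaw (σ.withDensity g₁)))
        ((pppLaw (ρ.withDensity f₂)).prod (pppLaw (σ.withDensity g₂)))
      = 2 * (1 - Real.exp (-((sqrtDistSq ρ f₁ f₂).toReal + (sqrtDistSq σ g₁ g₂).toReal) / 2)) := by
  have hF₁ := pppLaw_withDensity ρ hf₁
  have hF₂ := pppLaw_withDensity ρ hf₂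
  have hG₁ := pppLaw_withDensity σ hg₁
  have hG₂ := pppLaw_withDensity σ hg₂
  have : IsProbabilityMeasure ((pppBase ρ).withDensity (poissonDensity ρ f₁)) := hF₁ ▸ inferInstance
  have : IsProbabilityMeasure ((pppBase ρ).withDensity (poissonDensity ρ f₂)) := hF₂ ▸ inferInstance
  have : IsProbabilityMeasure ((pppBase σ).withDensity (poissonDensity σ g₁)) := hG₁ ▸ inferInstance
  have : IsProbabilityMeasure ((pppBase σ).withDensity (poissonDensity σ g₂)) := hG₂ ▸ inferInstance
  rw [hF₁, hF₂, hG₁, hG₂, hellingerSq_prod_withDensity _ _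
    (measurable_poissonDensity ρ hf₁) (measurable_poissonDensity ρ hf₂)
    (measurable_poissonDensity σ hg₁) (measurable_poissonDensity σ hg₂)
    (poissonDensity_ne_top ρ hf₁_top) (poissonDensity_ne_top ρ hf₂_top)
    (poissonDensity_ne_top σ hg₁_top) (poissonDensity_ne_top σ hg₂_top),
    lintegral_rpow_poissonDensity ρ hf₁ hf₂ hf₁_top hf₂_top
      (lintegral_ne_top_of_isFiniteMeasure_withDensity ρ f₁)
      (lintegral_ne_top_of_isFiniteMeasure_withDensity ρ f₂),
    lintegral_rpow_poissonDensity σ hg₁ hg₂ hg₁_top hg₂_top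
      (lintegral_ne_top_of_isFiniteMeasure_withDensity σ g₁)
      (lintegral_ne_top_of_isFiniteMeasure_withDensity σ g₂),
    ← ENNReal.ofReal_mul (Real.exp_nonneg _), ← Real.exp_add,
    ENNReal.toReal_ofReal (Real.exp_nonneg _)]
  congr 3
  ring

end Poisson

lemma volume_Icc_symmDiff_Icc_right {a b₁ b₂ : ℝ} (h₁ : a ≤ b₁) (h₂ : a ≤ b₂) :
    volume (Icc a b₁ ∆ Icc a b₂) = ENNReal.ofReal |b₁ - b₂| := by
  wlog h : b₁ ≤ b₂ generalizing b₁ b₂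
  · rw [symmDiff_comm, abs_sub_comm]
    exact this h₂ h₁ (le_of_not_ge h)
  rw [abs_of_nonpos (sub_nonpos.2 h), neg_sub, ← Real.volume_Ioc]
  congr 1
  ext y
  simp only [Set.mem_symmDiff, Set.mem_Icc, Set.mem_Ioc]
  grind

lemma volume_Icc_symmDiff_Icc_left {a₁ a₂ b : ℝ} (h₁ : a₁ ≤ b) (h₂ : a₂ ≤ b) :
    volume (Icc a₁ b ∆ Icc a₂ b) = ENNReal.ofReal |a₁ - a₂| := by
  wlog h : a₁ ≤ a₂ generalizing a₁ a₂
  · rw [symmDiff_comm, abs_sub_comm]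
    exact this h₂ h₁ (le_of_not_ge h)
  rw [abs_of_nonpos (sub_nonpos.2 h), neg_sub, ← Real.volume_Ico]
  congr 1
  ext y
  simp only [Set.mem_symmDiff, Set.mem_Icc, Set.mem_Ico]
  grind

section Band

variable {α β : Type*}

def bandSet (T : Set α) (I : α → Set β) : Set (α × β) := {z | z.1 ∈ T ∧ z.2 ∈ I z.1}

noncomputable def bandDensity (w : α → ℝ) (T : Set α) (I : α → Set β) (z : α × β) : ℝ≥0∞ :=
  ENNReal.ofReal ((bandSet T I).indicator (fun z => w z.1) z)

lemma bandSet_symmDiff (T : Set α) (I₁ I₂ : α → Set β) :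
    bandSet T I₁ ∆ bandSet T I₂ = bandSet T fun x => I₁ x ∆ I₂ x := by
  ext z
  simp only [bandSet, Set.mem_symmDiff, Set.mem_ofPred_eq]
  tauto

lemma sqrtDistSq_bandDensity [MeasurableSpace α] [MeasurableSpace β] (μ : Measure (α × β))
    {w : α → ℝ} (hw : ∀ x, 0 ≤ w x) (T : Set α) (I₁ I₂ : α → Set β) :
    sqrtDistSq μ (bandDensity w T I₁) (bandDensity w T I₂)
      = ∫⁻ z, bandDensity w T (fun x => I₁ x ∆ I₂ x) z ∂μ := by
  refine lintegral_congr fun z => ?_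
  have hw' (I : α → Set β) : 0 ≤ (bandSet T I).indicator (fun z => w z.1) z :=
    Set.indicator_nonneg (fun z _ => hw z.1) z
  rw [bandDensity, bandDensity, ENNReal.toReal_ofReal (hw' _), ENNReal.toReal_ofReal (hw' _),
    sqrt_indicator_sub_sq (w := fun z : α × β => w z.1) (fun z => hw z.1),
    bandSet_symmDiff, bandDensity]

variable [MeasurableSpace α] [MeasurableSpace β]

lemma measurableSet_bandSet_Icc {T : Set α} (hT : MeasurableSet T) {a b : α → ℝ}
    (ha : Measurable a) (hb : Measurable b) :
    MeasurableSet (bandSet T fun x => Icc (a x) (b x)) :=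
  (measurable_fst hT).inter ((measurableSet_le (ha.comp measurable_fst) measurable_snd).inter
    (measurableSet_le measurable_snd (hb.comp measurable_fst)))

lemma measurable_bandDensity {w : α → ℝ} (hw : Measurable w) {T : Set α} {I : α → Set β}
    (hS : MeasurableSet (bandSet T I)) : Measurable (bandDensity w T I) :=
  ((hw.comp measurable_fst).indicator hS).ennreal_ofReal

lemma lintegral_bandDensity (μ : Measure α) (ν : Measure β) [SFinite ν] {w : α → ℝ}
    (hw : Measurable w) {T : Set α} (hT : MeasurableSet T) {I : α → Set β}
    (hS : MeasurableSet (bandSet T I)) :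
    ∫⁻ z, bandDensity w T I z ∂(μ.prod ν) = ∫⁻ x in T, ENNReal.ofReal (w x) * ν (I x) ∂μ := by
  have hdens : bandDensity w T I = (bandSet T I).indicator fun z => ENNReal.ofReal (w z.1) := by
    funext z
    by_cases hz : z ∈ bandSet T I <;> simp [bandDensity, hz]
  have hsec (x : α) : ν (Prod.mk x ⁻¹' bandSet T I) = T.indicator (fun x => ν (I x)) x := by
    by_cases hx : x ∈ T <;> simp [bandSet, hx, Set.preimage]
  rw [hdens, lintegral_indicator hS, ← withDensity_apply _ hS,
    ← prod_withDensity_left hw.ennreal_ofReal, Measure.prod_apply hS,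
    lintegral_withDensity_eq_lintegral_mul _ hw.ennreal_ofReal
      (measurable_measure_prodMk_left hS), ← lintegral_indicator hT]
  simp_rw [Pi.mul_apply, hsec, Set.indicator_mul_right]

lemma isFiniteMeasure_withDensity_bandDensity (μ : Measure α) (ν : Measure β) [SFinite ν]
    {w : α → ℝ} (hw : Measurable w) {K : ℝ} (hwK : ∀ x, w x ≤ K) {T : Set α}
    (hT : MeasurableSet T) (hμT : μ T ≠ ∞) {I : α → Set β} {V : Set β} (hIV : ∀ x, I x ⊆ V)
    (hνV : ν V ≠ ∞) (hS : MeasurableSet (bandSet T I)) :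
    IsFiniteMeasure ((μ.prod ν).withDensity (bandDensity w T I)) := by
  refine isFiniteMeasure_withDensity
    (ne_top_of_le_ne_top (b := ∫⁻ _ in T, ENNReal.ofReal K * ν V ∂μ) ?_ ?_)
  · rw [setLIntegral_const]
    exact ENNReal.mul_ne_top (ENNReal.mul_ne_top ENNReal.ofReal_ne_top hνV) hμT
  · rw [lintegral_bandDensity μ ν hw hT hS]
    exact lintegral_mono fun x => mul_le_mul' (ENNReal.ofReal_le_ofReal (hwK x))
      (measure_mono (hIV x))

lemma toReal_sqrtDistSq_bandDensity {w : ℝ → ℝ} (hw : Measurable w) (hw0 : ∀ x, 0 ≤ w x)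
    {T : Set ℝ} (hT : MeasurableSet T) {I₁ I₂ : ℝ → Set ℝ} (hS₁ : MeasurableSet (bandSet T I₁))
    (hS₂ : MeasurableSet (bandSet T I₂)) {d : ℝ → ℝ} (hd : Measurable d) (hd0 : ∀ x, 0 ≤ d x)
    (hvol : ∀ x, volume (I₁ x ∆ I₂ x) = ENNReal.ofReal (d x)) :
    (sqrtDistSq volume (bandDensity w T I₁) (bandDensity w T I₂)).toReal
      = ∫ x in T, w x * d x := by
  rw [sqrtDistSq_bandDensity _ hw0, Measure.volume_eq_prod, lintegral_bandDensity _ _ hw hT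
    (bandSet_symmDiff T I₁ I₂ ▸ hS₁.symmDiff hS₂), integral_eq_lintegral_of_nonneg_ae
    (ae_of_all _ fun x => mul_nonneg (hw0 x) (hd0 x)) (hw.mul hd).aestronglyMeasurable]
  simp_rw [hvol, ENNReal.ofReal_mul (hw0 _)]

end Band

section Intensities

variable (C J : ℝ) (fD : ℝ → ℝ) (n : ℕ) (θ : ℝ → ℝ)

noncomputable def lowerDensity : ℝ × ℝ → ℝ≥0∞ :=
  bandDensity (fun x => fD x * n * J) (Icc 0 1) fun x => Icc (-C - 1) (θ x)

noncomputable def upperDensity : ℝ × ℝ → ℝ≥0∞ :=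
  bandDensity (fun x => fD x * n * J) (Icc 0 1) fun x => Icc (θ x) (C + 1)

variable {C J fD n θ}

lemma measurable_lowerDensity (hfD : Measurable fD) (hθ : Measurable θ) :
    Measurable (lowerDensity C J fD n θ) :=
  measurable_bandDensity (by fun_prop)
    (measurableSet_bandSet_Icc measurableSet_Icc measurable_const hθ)

lemma measurable_upperDensity (hfD : Measurable fD) (hθ : Measurable θ) :
    Measurable (upperDensity C J fD n θ) :=
  measurable_bandDensity (by fun_prop)
    (measurableSet_bandSet_Icc measurableSet_Icc hθ measurable_const)

lemma isFiniteMeasure_lowerDensity (hfD : Measurable fD) {M : ℝ} (hfDM : ∀ x, fD x ≤ M)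
    (hJ : 0 ≤ J) (hθm : Measurable θ) (hθ : ∀ x, |θ x| ≤ C) :
    IsFiniteMeasure (volume.withDensity (lowerDensity C J fD n θ)) :=
  isFiniteMeasure_withDensity_bandDensity volume volume (by fun_prop)
    (fun x => mul_le_mul_of_nonneg_right (mul_le_mul_of_nonneg_right (hfDM x) n.cast_nonneg) hJ)
    measurableSet_Icc (by simp) (V := Icc (-C - 1) (C + 1))
    (fun x => Icc_subset_Icc le_rfl (by linarith [le_abs_self (θ x), hθ x]))
    (by simp) (measurableSet_bandSet_Icc measurableSet_Icc measurable_const hθm)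

lemma isFiniteMeasure_upperDensity (hfD : Measurable fD) {M : ℝ} (hfDM : ∀ x, fD x ≤ M)
    (hJ : 0 ≤ J) (hθm : Measurable θ) (hθ : ∀ x, |θ x| ≤ C) :
    IsFiniteMeasure (volume.withDensity (upperDensity C J fD n θ)) :=
  isFiniteMeasure_withDensity_bandDensity volume volume (by fun_prop)
    (fun x => mul_le_mul_of_nonneg_right (mul_le_mul_of_nonneg_right (hfDM x) n.cast_nonneg) hJ)
    measurableSet_Icc (by simp) (V := Icc (-C - 1) (C + 1))
    (fun x => Icc_subset_Icc (by linarith [neg_abs_le (θ x), hθ x]) le_rfl)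
    (by simp) (measurableSet_bandSet_Icc measurableSet_Icc hθm measurable_const)

lemma toReal_sqrtDistSq_lowerDensity (hfD : Measurable fD) (hfD0 : ∀ x, 0 ≤ fD x) (hJ : 0 ≤ J)
    {θ₁ θ₂ : ℝ → ℝ} (h₁m : Measurable θ₁) (h₂m : Measurable θ₂) (h₁ : ∀ x, |θ₁ x| ≤ C)
    (h₂ : ∀ x, |θ₂ x| ≤ C) :
    (sqrtDistSq volume (lowerDensity C J fD n θ₁) (lowerDensity C J fD n θ₂)).toReal
      = n * J * ∫ x in Icc 0 1, |θ₁ x - θ₂ x| * fD x := by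
  rw [lowerDensity, lowerDensity, toReal_sqrtDistSq_bandDensity (by fun_prop)
    (fun x => mul_nonneg (mul_nonneg (hfD0 x) n.cast_nonneg) hJ) measurableSet_Icc
    (measurableSet_bandSet_Icc measurableSet_Icc measurable_const h₁m)
    (measurableSet_bandSet_Icc measurableSet_Icc measurable_const h₂m)
    (d := fun x => |θ₁ x - θ₂ x|) (by fun_prop) (fun _ => abs_nonneg _)
    (fun x => volume_Icc_symmDiff_Icc_right (by linarith [neg_abs_le (θ₁ x), h₁ x])
      (by linarith [neg_abs_le (θ₂ x), h₂ x])), ← integral_const_mul]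
  congr 1 with x
  ring

lemma toReal_sqrtDistSq_upperDensity (hfD : Measurable fD) (hfD0 : ∀ x, 0 ≤ fD x) (hJ : 0 ≤ J)
    {θ₁ θ₂ : ℝ → ℝ} (h₁m : Measurable θ₁) (h₂m : Measurable θ₂) (h₁ : ∀ x, |θ₁ x| ≤ C)
    (h₂ : ∀ x, |θ₂ x| ≤ C) :
    (sqrtDistSq volume (upperDensity C J fD n θ₁) (upperDensity C J fD n θ₂)).toReal
      = n * J * ∫ x in Icc 0 1, |θ₁ x - θ₂ x| * fD x := by
  rw [upperDensity, upperDensity, toReal_sqrtDistSq_bandDensity (by fun_prop)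
    (fun x => mul_nonneg (mul_nonneg (hfD0 x) n.cast_nonneg) hJ) measurableSet_Icc
    (measurableSet_bandSet_Icc measurableSet_Icc h₁m measurable_const)
    (measurableSet_bandSet_Icc measurableSet_Icc h₂m measurable_const)
    (d := fun x => |θ₁ x - θ₂ x|) (by fun_prop) (fun _ => abs_nonneg _)
    (fun x => volume_Icc_symmDiff_Icc_left (by linarith [le_abs_self (θ₁ x), h₁ x])
      (by linarith [le_abs_self (θ₂ x), h₂ x])), ← integral_const_mul]
  congr 1 with x
  ring

end Intensities

theorem stmt15_general (C J₁ J₂ : ℝ) (hJ₁ : 0 < J₁) (hJ₂ : 0 < J₂)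
    (fD : ℝ → ℝ) (hfDm : Measurable fD) (hfD0 : ∀ x, 0 ≤ fD x)
    (M : ℝ) (hfDbd : ∀ x, fD x ≤ M)
    (n : ℕ) (θ₁ θ₂ : ℝ → ℝ) (h1m : Measurable θ₁) (h2m : Measurable θ₂)
    (h1b : ∀ x, |θ₁ x| ≤ C) (h2b : ∀ x, |θ₂ x| ≤ C)
    [SigmaFinite (lowerIntensity C J₁ fD n θ₁)] [SigmaFinite (upperIntensity C J₂ fD n θ₁)]
    [SigmaFinite (lowerIntensity C J₁ fD n θ₂)] [SigmaFinite (upperIntensity C J₂ fD n θ₂)] :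
    hellingerSq
        ((pppLaw (lowerIntensity C J₁ fD n θ₁)).prod (pppLaw (upperIntensity C J₂ fD n θ₁)))
        ((pppLaw (lowerIntensity C J₁ fD n θ₂)).prod (pppLaw (upperIntensity C J₂ fD n θ₂)))
      = 2 * (1 - Real.exp (-((n : ℝ) / 2) * (J₁ + J₂) *
          ∫ x in Icc (0:ℝ) 1, |θ₁ x - θ₂ x| * fD x)) := by
  have := isFiniteMeasure_lowerDensity (n := n) hfDm hfDbd hJ₁.le h1m h1b
  have := isFiniteMeasure_lowerDensity (n := n) hfDm hfDbd hJ₁.le h2m h2b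
  have := isFiniteMeasure_upperDensity (n := n) hfDm hfDbd hJ₂.le h1m h1b
  have := isFiniteMeasure_upperDensity (n := n) hfDm hfDbd hJ₂.le h2m h2b
  -- `lowerIntensity C J fD n θ` unfolds to `volume.withDensity (lowerDensity C J fD n θ)`.
  refine (hellingerSq_prod_pppLaw volume volume (measurable_lowerDensity hfDm h1m)
    (measurable_lowerDensity hfDm h2m) (measurable_upperDensity hfDm h1m)
    (measurable_upperDensity hfDm h2m) (fun _ => ENNReal.ofReal_ne_top)
    (fun _ => ENNReal.ofReal_ne_top) (fun _ => ENNReal.ofReal_ne_top)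
    (fun _ => ENNReal.ofReal_ne_top)).trans ?_
  rw [toReal_sqrtDistSq_lowerDensity hfDm hfD0 hJ₁.le h1m h2m h1b h2b,
    toReal_sqrtDistSq_upperDensity hfDm hfD0 hJ₂.le h1m h2m h1b h2b]
  congr 3
  ring

theorem stmt15 (C J₁ J₂ : ℝ) (hC : 0 < C) (hJ₁ : 0 < J₁) (hJ₂ : 0 < J₂)
    (fD : ℝ → ℝ) (hfDm : Measurable fD) (hfD0 : ∀ x, 0 ≤ fD x)
    (M : ℝ) (hfDbd : ∀ x, fD x ≤ M) (hfD1 : ∫ x in Icc (0:ℝ) 1, fD x = 1)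
    (n : ℕ) (θ₁ θ₂ : ℝ → ℝ) (h1m : Measurable θ₁) (h2m : Measurable θ₂)
    (h1b : ∀ x, |θ₁ x| ≤ C) (h2b : ∀ x, |θ₂ x| ≤ C)
    [SigmaFinite (lowerIntensity C J₁ fD n θ₁)] [SigmaFinite (upperIntensity C J₂ fD n θ₁)]
    [SigmaFinite (lowerIntensity C J₁ fD n θ₂)] [SigmaFinite (upperIntensity C J₂ fD n θ₂)] :
    hellingerSq
        ((pppLaw (lowerIntensity C J₁ fD n θ₁)).prod (pppLaw (upperIntensity C J₂ fD n θ₁)))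
        ((pppLaw (lowerIntensity C J₁ fD n θ₂)).prod (pppLaw (upperIntensity C J₂ fD n θ₂)))
      = 2 * (1 - Real.exp (-((n : ℝ) / 2) * (J₁ + J₂) *
          ∫ x in Icc (0:ℝ) 1, |θ₁ x - θ₂ x| * fD x)) :=
  stmt15_general C J₁ J₂ hJ₁ hJ₂ fD hfDm hfD0 M hfDbd n θ₁ θ₂ h1m h2m h1b h2b
end
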